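/- Let (V,Y,1,s) be an H-module vertex algebra where H = kG is the group Hopf algebra of a finite subgroup G of Aut(V), and let H* be the dual Hopf algebra with basis {ρ_g} and identity E = Σ_{g∈G} ρ_g. Then (V#H#H*, Y^{V#H#H*}, 1#1#E, s#1#E), where Y^{V#H#H*}(u#g#ρ_a, z)(v#h#ρ_b) = δ_{a,hb}·Y(u,z)(gv) # gh # ρ_b (extended linearly), is an S-local vertex algebra. -/

import Mathlib

open scoped TensorProduct DirectSum

namespace HopfVA

/-- Generalized binomial coefficient `C(r, j)` for an integer `r` (exact division). -/
def ibinom (r : ℤ) (j : ℕ) : ℤ := (∏ i ∈ Finset.range j, (r - (i : ℤ))) / (j.factorial : ℤ)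

/-- `(-1)^q` for an integer exponent `q`. -/
def negOnePow (q : ℤ) : ℤ := if Even q then 1 else -1

section Core

variable {k : Type*} [CommRing k] {V : Type*} [AddCommGroup V] [Module k V]

/-- If `f p q` is the coefficient of `z^p w^q` of a two-variable formal distribution,
then `zwMul n f p q` is the coefficient of `z^p w^q` of `(z-w)^n` times that distribution. -/
def zwMul (n : ℕ) (f : ℤ → ℤ → V) : ℤ → ℤ → V := fun p q =>
  ∑ i ∈ Finset.range (n + 1),
    ((-1 : ℤ) ^ i * (n.choose i : ℤ)) • f (p - ((n : ℤ) - (i : ℤ))) (q - (i : ℤ))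

/-- The data of a state-field correspondence on a pointed vector space:
`Y a n b` is the `n`-th product `a_n b` (so that `Y(a,z)b = ∑ (a_n b) z^{-n-1}`),
`vac` is the vacuum vector and `T` is the translation operator. -/
structure VAData (k V : Type*) [CommRing k] [AddCommGroup V] [Module k V] where
  Y : V →ₗ[k] ℤ → Module.End k V
  vac : V
  T : Module.End k V

namespace VAData

variable (F : VAData k V)

/-- coefficient of `z^p w^q` in `Y(a,z)Y(b,w)c`. -/
def prodZW (a b c : V) : ℤ → ℤ → V := fun p q => F.Y a (-p - 1) (F.Y b (-q - 1) c)

/-- coefficient of `z^p w^q` in `Y(b,w)Y(a,z)c`. -/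
def prodWZ (a b c : V) : ℤ → ℤ → V := fun p q => F.Y b (-q - 1) (F.Y a (-p - 1) c)

/-- coefficient of `z^p w^q` in `i_{z,w} Y(a,z-w)Y(b,-w)c`. -/
noncomputable def compLHS (a b c : V) : ℤ → ℤ → V := fun p q =>
  negOnePow q •
    ∑ᶠ j : ℕ, ibinom (p + (j : ℤ)) j • F.Y a (-p - 1 - (j : ℤ)) (F.Y b ((j : ℤ) - 1 - q) c)

/-- Truncated (at `j < J`) version of `compLHS`, for `h`-adic statements. -/
def compLHStr (J : ℕ) (a b c : V) : ℤ → ℤ → V := fun p q =>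
  negOnePow q •
    ∑ j ∈ Finset.range J, ibinom (p + (j : ℤ)) j • F.Y a (-p - 1 - (j : ℤ)) (F.Y b ((j : ℤ) - 1 - q) c)

/-- coefficient of `z^p w^q` in `Y(Y(a,z)b,-w)c`. -/
def compRHS (a b c : V) : ℤ → ℤ → V := fun p q =>
  negOnePow q • F.Y (F.Y a (-p - 1) b) (-q - 1) c

/-- The axioms of a state-field correspondence: truncation, the vacuum axioms
`Y(1,z)a = a`, `Y(a,z)1 = a + (Ta)z + ⋯ ∈ V[[z]]`, and translation covariance
`[T, Y(a,z)] = Y(Ta,z) = ∂_z Y(a,z)`. -/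
def IsStateField : Prop :=
  (∀ a b : V, ∃ N : ℤ, ∀ n : ℤ, N ≤ n → F.Y a n b = 0) ∧
  (∀ (a : V) (n : ℤ), F.Y F.vac n a = if n = -1 then a else 0) ∧
  (∀ (a : V) (n : ℤ), 0 ≤ n → F.Y a n F.vac = 0) ∧
  (∀ a : V, F.Y a (-1) F.vac = a) ∧
  (∀ a : V, F.Y a (-2) F.vac = F.T a) ∧
  (∀ (a b : V) (n : ℤ), F.Y (F.T a) n b = F.T (F.Y a n b) - F.Y a n (F.T b)) ∧
  (∀ (a b : V) (n : ℤ), F.Y (F.T a) n b = (-n : ℤ) • F.Y a (n - 1) b)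

/-- The associativity relation
`(z-w)^N i_{z,w} Y(a,z-w)Y(b,-w)c = (z-w)^N Y(Y(a,z)b,-w)c`. -/
def IsAssocFA : Prop := ∀ a b c : V, ∃ N : ℕ, ∀ p q : ℤ,
  zwMul N (F.compLHS a b c) p q = zwMul N (F.compRHS a b c) p q

/-- A field algebra is a state-field correspondence satisfying associativity. -/
def IsFieldAlgebra : Prop := F.IsStateField ∧ F.IsAssocFA

/-- `(z-w)^n [Y(a,z), Y(b,w)] = 0`. -/
def IsLocalPair (a b : V) : Prop :=
  ∃ n : ℕ, ∀ (c : V) (p q : ℤ), zwMul n (F.prodZW a b c) p q = zwMul n (F.prodWZ a b c) p q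

/-- A vertex algebra is a field algebra all of whose pairs of fields are local. -/
def IsVertexAlgebra : Prop := F.IsFieldAlgebra ∧ ∀ a b : V, F.IsLocalPair a b

/-- `(z-w)^n Y(a,z)Y(b,w) = (z-w)^n ∑ᵢ Y(bⁱ,w)Y(aⁱ,z)`. -/
def IsSLocalPair (a b : V) : Prop :=
  ∃ (n m : ℕ) (A B : Fin m → V), ∀ (c : V) (p q : ℤ),
    zwMul n (F.prodZW a b c) p q = ∑ i, zwMul n (F.prodWZ (A i) (B i) c) p q

/-- An `S`-local vertex algebra is a field algebra all of whose pairs of fields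
are `S`-local. -/
def IsSLocalVA : Prop := F.IsFieldAlgebra ∧ ∀ a b : V, F.IsSLocalPair a b

end VAData

/-- Data of a module over a field algebra: the module fields `Y^M` and translation `sM`. -/
structure VModData (k V M : Type*) [CommRing k] [AddCommGroup V] [Module k V]
    [AddCommGroup M] [Module k M] where
  YM : V →ₗ[k] ℤ → Module.End k M
  sM : Module.End k M

namespace VModData

variable {M : Type*} [AddCommGroup M] [Module k M]

/-- coefficient of `z^p w^q` in `Y^M(a,z)Y^M(b,w)x`. -/
def mprodZW (Mo : VModData k V M) (a b : V) (x : M) : ℤ → ℤ → M := fun p q =>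
  Mo.YM a (-p - 1) (Mo.YM b (-q - 1) x)

/-- coefficient of `z^p w^q` in `Y^M(b,w)Y^M(a,z)x`. -/
def mprodWZ (Mo : VModData k V M) (a b : V) (x : M) : ℤ → ℤ → M := fun p q =>
  Mo.YM b (-q - 1) (Mo.YM a (-p - 1) x)

/-- coefficient of `z^p w^q` in `i_{z,w} Y^M(a,z-w)Y^M(b,-w)x`. -/
noncomputable def mcompLHS (Mo : VModData k V M) (a b : V) (x : M) : ℤ → ℤ → M := fun p q =>
  negOnePow q •
    ∑ᶠ j : ℕ, ibinom (p + (j : ℤ)) j • Mo.YM a (-p - 1 - (j : ℤ)) (Mo.YM b ((j : ℤ) - 1 - q) x)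

/-- coefficient of `z^p w^q` in `Y^M(Y(a,z)b,-w)x`. -/
def mcompRHS (F : VAData k V) (Mo : VModData k V M) (a b : V) (x : M) : ℤ → ℤ → M := fun p q =>
  negOnePow q • Mo.YM (F.Y a (-p - 1) b) (-q - 1) x

/-- `M` is a left module over the field algebra `F`: truncation, vacuum, translation
invariance and the associativity axiom. -/
def IsModule (F : VAData k V) (Mo : VModData k V M) : Prop :=
  (∀ (a : V) (x : M), ∃ N : ℤ, ∀ n : ℤ, N ≤ n → Mo.YM a n x = 0) ∧
  (∀ (x : M) (n : ℤ), Mo.YM F.vac n x = if n = -1 then x else 0) ∧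
  (∀ (a : V) (x : M) (n : ℤ),
      Mo.sM (Mo.YM a n x) - Mo.YM a n (Mo.sM x) = (-n : ℤ) • Mo.YM a (n - 1) x) ∧
  (∀ (a b : V) (x : M), ∃ N : ℕ, ∀ p q : ℤ,
      zwMul N (mcompLHS Mo a b x) p q = zwMul N (mcompRHS F Mo a b x) p q)

/-- Locality of the module fields `Y^M(a,z)`, `Y^M(b,w)`. -/
def IsLocalModPair (Mo : VModData k V M) (a b : V) : Prop :=
  ∃ n : ℕ, ∀ (x : M) (p q : ℤ),
    zwMul n (mprodZW Mo a b x) p q = zwMul n (mprodWZ Mo a b x) p q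

/-- `S`-locality of the module fields. -/
def IsSLocalModPair (Mo : VModData k V M) (a b : V) : Prop :=
  ∃ (n m : ℕ) (A B : Fin m → V), ∀ (x : M) (p q : ℤ),
    zwMul n (mprodZW Mo a b x) p q = ∑ i, zwMul n (mprodWZ Mo (A i) (B i) x) p q

end VModData

/-- The `f`-product `a_(f) b = Res_z f(z) Y(a,z) b`, where `f n` is the coefficient
of `z^n` in `f`. -/
noncomputable def fProduct (F : VAData k V) (f : ℤ → k) (a b : V) : V :=
  ∑ᶠ n : ℤ, f n • F.Y a n b

/-- Coefficients of the formal derivative `∂_z f`. -/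
def derivCoef (f : ℤ → k) : ℤ → k := fun n => ((n : ℤ) + 1 : ℤ) • f (n + 1)

/-- The subspace `V_(g) V` spanned by all products `a_(g) b` with `g = ∂_z f`. -/
noncomputable def gSpan (F : VAData k V) (f : ℤ → k) : Submodule k V :=
  Submodule.span k {x : V | ∃ a b : V, x = fProduct F (derivCoef f) a b}

/-- `x ≡ y mod h^M`, where `h = r`. -/
def ModH (r : k) (M : ℕ) (x y : V) : Prop := ∃ v : V, x - y = r ^ M • v

/-- An automorphism of the (state-field data of a) vertex algebra `F`. -/
def IsVAAut (F : VAData k V) (φ : V ≃ₗ[k] V) : Prop :=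
  φ F.vac = F.vac ∧ (∀ v : V, φ (F.T v) = F.T (φ v)) ∧
  ∀ (a b : V) (n : ℤ), φ (F.Y a n b) = F.Y (φ a) n (φ b)

end Core

/-- The coefficients of `f(z) = z⁻¹`. -/
def zinvCoef (k : Type*) [CommRing k] : ℤ → k := fun n => if n = -1 then 1 else 0

/-- The coefficients of `f(z) = c·e^{cz}/(e^{cz}-1)
  = z⁻¹ + c + ∑_{m≥1} B_m c^m z^{m-1}/m!` (Bernoulli numbers `B_m`). -/
noncomputable def berCoef {k : Type*} [Field k] [CharZero k] (c : k) : ℤ → k := fun n =>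
  if n < -1 then 0
  else ((bernoulli (n + 1).toNat : ℚ) • (c ^ (n + 1).toNat)) / ((n + 1).toNat.factorial : k)
        + (if n = 0 then c else 0)

/-- `f(z) = z⁻¹` or `f(z) = c·e^{cz}/(e^{cz}-1)` with `c ≠ 0`. -/
def AdmissibleF {k : Type*} [Field k] [CharZero k] (f : ℤ → k) : Prop :=
  f = zinvCoef k ∨ ∃ c : k, c ≠ 0 ∧ f = berCoef c

section HopfDefs

variable {k : Type*} [CommRing k] {V : Type*} [AddCommGroup V] [Module k V]
variable (H : Type*) [Ring H] [HopfAlgebra k H]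

/-- `V` is an `H`-module field algebra: `h·1 = ε(h)1`, `h(Ta) = T(ha)` and
`h(aₙb) = ∑ (h₁a)ₙ(h₂b)` (the last condition quantified over all finite
representations of `Δ(h)`). -/
def IsHModuleFA [Module H V] [IsScalarTower k H V] (F : VAData k V) : Prop :=
  (∀ h : H, h • F.vac = (Coalgebra.counit (R := k) h) • F.vac) ∧
  (∀ (h : H) (a : V), h • (F.T a : V) = F.T (h • a)) ∧
  (∀ (h : H) (a b : V) (n : ℤ) (m : ℕ) (h1 h2 : Fin m → H),
      Coalgebra.comul (R := k) h = ∑ i, h1 i ⊗ₜ[k] h2 i →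
      h • (F.Y a n b : V) = ∑ i, F.Y (h1 i • a) n (h2 i • b))

/-- The smash product structure `V # H` on `V ⊗ H`:
`Y(a#h,z)(b#g) = ∑ Y(a,z)(h₁b) # h₂g`, vacuum `1#1`, translation `T#1`. -/
def SmashChar [Module H V] [IsScalarTower k H V] (F : VAData k V)
    (FS : VAData k (V ⊗[k] H)) : Prop :=
  (∀ (a b : V) (h g : H) (n : ℤ) (m : ℕ) (h1 h2 : Fin m → H),
      Coalgebra.comul (R := k) h = ∑ i, h1 i ⊗ₜ[k] h2 i →
      FS.Y (a ⊗ₜ[k] h) n (b ⊗ₜ[k] g) = ∑ i, (F.Y a n (h1 i • b) : V) ⊗ₜ[k] (h2 i * g)) ∧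
  (FS.vac = F.vac ⊗ₜ[k] (1 : H)) ∧
  (∀ (a : V) (h : H), FS.T (a ⊗ₜ[k] h) = (F.T a : V) ⊗ₜ[k] h)

end HopfDefs

/-- The fixed point subspace `V^H = {v | h v = ε(h) v for all h}`. -/
def hFixed (k V H : Type*) [CommRing k] [AddCommGroup V] [Module k V]
    [Ring H] [HopfAlgebra k H] [Module H V] [IsScalarTower k H V]
    [SMulCommClass k H V] : Submodule k V where
  carrier := {v : V | ∀ h : H, h • v = (Coalgebra.counit (R := k) h) • v}
  add_mem' := by
    intro a b ha hb h
    rw [smul_add, ha h, hb h, ← smul_add]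
  zero_mem' := by
    intro h
    simp
  smul_mem' := by
    intro c v hv h
    rw [← smul_comm c h v, hv h, smul_smul, smul_smul, mul_comm]

end HopfVA

namespace HopfVA


section ZWAux
variable {W W' : Type*} [AddCommGroup W] [AddCommGroup W']

lemma zwMul_congr {n : ℕ} {f g : ℤ → ℤ → W} (h : ∀ p q, f p q = g p q) (p q : ℤ) :
    zwMul n f p q = zwMul n g p q := by
  unfold zwMul; exact Finset.sum_congr rfl fun i _ => by rw [h]

lemma zwMul_apply_pt {ι : Type*} (n : ℕ) (f : ℤ → ℤ → (ι → W)) (p q : ℤ) (x : ι) :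
    zwMul n f p q x = zwMul n (fun p q => f p q x) p q := by
  simp [zwMul, Finset.sum_apply, Pi.smul_apply]

lemma zwMul_zero_fn (n : ℕ) (p q : ℤ) : zwMul n (fun _ _ => (0 : W)) p q = 0 := by
  simp [zwMul]

lemma zwMul_map (L : W →+ W') (n : ℕ) (f : ℤ → ℤ → W) (p q : ℤ) :
    zwMul n (fun p q => L (f p q)) p q = L (zwMul n f p q) := by
  simp [zwMul, map_sum, map_zsmul]

lemma zwMul_sum {ι : Type*} (s : Finset ι) (f : ι → ℤ → ℤ → W) (n : ℕ) (p q : ℤ) :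
    zwMul n (fun p q => ∑ i ∈ s, f i p q) p q = ∑ i ∈ s, zwMul n (f i) p q := by
  unfold zwMul
  rw [Finset.sum_comm]
  exact Finset.sum_congr rfl fun i _ => by rw [Finset.smul_sum]

lemma zwMul_smul (c : ℤ) (f : ℤ → ℤ → W) (n : ℕ) (p q : ℤ) :
    zwMul n (fun p q => c • f p q) p q = c • zwMul n f p q := by
  simp [zwMul, Finset.smul_sum, smul_comm c]

lemma zwMul_succ (n : ℕ) (f : ℤ → ℤ → W) (p q : ℤ) :
    zwMul (n+1) f p q = zwMul n f (p-1) q - zwMul n f p (q-1) := by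
  have key : ∀ i : ℕ, (((n+1).choose i : ℤ)) =
      (n.choose i : ℤ) + (if i = 0 then 0 else (n.choose (i-1) : ℤ)) := by
    intro i
    cases i with
    | zero => simp
    | succ j => simp [Nat.choose_succ_succ, add_comm]
  have h1 : zwMul (n+1) f p q
      = (∑ i ∈ Finset.range (n+2), ((-1:ℤ)^i * (n.choose i : ℤ)) • f (p - ((n:ℤ)+1 - i)) (q - i))
      + ∑ i ∈ Finset.range (n+2),
          ((-1:ℤ)^i * (if i = 0 then 0 else (n.choose (i-1) : ℤ))) • f (p - ((n:ℤ)+1 - i)) (q - i) := by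
    rw [← Finset.sum_add_distrib]
    unfold zwMul
    refine Finset.sum_congr rfl fun i _ => ?_
    rw [key i, mul_add, add_smul]
    push_cast
    ring_nf
  have h2 : (∑ i ∈ Finset.range (n+2), ((-1:ℤ)^i * (n.choose i : ℤ)) • f (p - ((n:ℤ)+1 - i)) (q - i))
      = zwMul n f (p-1) q := by
    rw [Finset.sum_range_succ]
    simp only [Nat.choose_succ_self, Nat.cast_zero, mul_zero, zero_smul, add_zero]
    unfold zwMul
    refine Finset.sum_congr rfl fun i _ => ?_
    have hA : p - ((n:ℤ)+1 - i) = p - 1 - ((n:ℤ) - i) := by ring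
    rw [hA]
  have h3 : (∑ i ∈ Finset.range (n+2),
        ((-1:ℤ)^i * (if i = 0 then 0 else (n.choose (i-1) : ℤ))) • f (p - ((n:ℤ)+1 - i)) (q - i))
      = - zwMul n f p (q-1) := by
    rw [Finset.sum_range_succ']
    simp only [if_true, eq_self_iff_true, mul_zero, zero_smul, add_zero, Nat.add_sub_cancel,
      Nat.succ_ne_zero, if_false]
    unfold zwMul
    rw [← Finset.sum_neg_distrib]
    refine Finset.sum_congr rfl fun i _ => ?_
    have hA : p - ((n:ℤ)+1 - ((i+1:ℕ):ℤ)) = p - ((n:ℤ) - i) := by push_cast; ring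
    have hB : q - (((i:ℕ)+1:ℕ):ℤ) = q - 1 - i := by push_cast; ring
    rw [hA, hB, show ((-1:ℤ)^(i+1)) = -(-1:ℤ)^i by ring]
    module
  rw [h1, h2, h3]; abel

lemma zwMul_ge {n : ℕ} {f g : ℤ → ℤ → W}
    (h : ∀ p q, zwMul n f p q = zwMul n g p q) {N : ℕ} (hn : n ≤ N) :
    ∀ p q, zwMul N f p q = zwMul N g p q := by
  induction N, hn using Nat.le_induction with
  | base => exact h
  | succ N hN ih => intro p q; rw [zwMul_succ, zwMul_succ, ih, ih]


end ZWAux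

section S12aux
set_option linter.unusedSectionVars false

variable {k : Type*} [Field k] [CharZero k]
  {V : Type*} [AddCommGroup V] [Module k V]
  {G : Type*} [Group G] [Fintype G] [DecidableEq G]

variable (F : VAData k V) (ρ : G →* (V ≃ₗ[k] V))

/-- The `Y` endomorphism on the function space `G × G → V`. -/
def yuE (x : G × G → V) (n : ℤ) : Module.End k (G × G → V) where
  toFun y := fun p => ∑ h : G, F.Y (x (p.1 * h⁻¹, h * p.2)) n ((ρ (p.1 * h⁻¹)) (y (h, p.2)))
  map_add' y z := by
    funext p
    simp [Pi.add_apply, map_add, Finset.sum_add_distrib]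
  map_smul' c y := by
    funext p
    simp [Pi.smul_apply, map_smul, Finset.smul_sum]

/-- The state-field map on the function space. -/
def yU : (G × G → V) →ₗ[k] ℤ → Module.End k (G × G → V) where
  toFun x := fun n => yuE F ρ x n
  map_add' x x' := by
    funext n
    apply LinearMap.ext; intro y
    funext p
    simp [yuE, Pi.add_apply, map_add, LinearMap.add_apply, Finset.sum_add_distrib]
  map_smul' c x := by
    funext n
    apply LinearMap.ext; intro y
    funext p
    simp [yuE, Pi.smul_apply, map_smul, LinearMap.smul_apply, Finset.smul_sum]

/-- vacuum on the function space -/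
def vacU : G × G → V := fun p => if (1 : G) = p.1 then F.vac else 0

/-- translation on the function space -/
def tU : Module.End k (G × G → V) where
  toFun x := fun p => F.T (x p)
  map_add' x y := by funext p; simp
  map_smul' c x := by funext p; simp

/-- the function-space `VAData` -/
def FUdef : VAData k (G × G → V) := ⟨yU F ρ, vacU F, tU F⟩

lemma yU_apply (x : G × G → V) (n : ℤ) (y : G × G → V) (p : G × G) :
    yU F ρ x n y p = ∑ h : G, F.Y (x (p.1 * h⁻¹, h * p.2)) n ((ρ (p.1 * h⁻¹)) (y (h, p.2))) := rfl

variable {F ρ} (haut : ∀ g : G, IsVAAut F (ρ g))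

section WithAut
include haut

lemma rho_mul (g h : G) (v : V) : (ρ g) ((ρ h) v) = (ρ (g * h)) v := by
  rw [map_mul]; rfl

lemma rho_one (v : V) : (ρ (1 : G)) v = v := by rw [map_one]; rfl

lemma yU_yU (x y z : G × G → V) (m n : ℤ) (pt : G × G) :
    yU F ρ x m (yU F ρ y n z) pt
      = ∑ h : G, ∑ l : G, F.Y (x (pt.1 * h⁻¹, h * pt.2)) m
          (F.Y ((ρ (pt.1 * h⁻¹)) (y (h * l⁻¹, l * pt.2))) n ((ρ (pt.1 * l⁻¹)) (z (l, pt.2)))) := by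
  rw [yU_apply]
  refine Finset.sum_congr rfl fun h _ => ?_
  rw [show (yU F ρ y n z) (h, pt.2)
      = ∑ l : G, F.Y (y (h * l⁻¹, l * pt.2)) n ((ρ (h * l⁻¹)) (z (l, pt.2))) from rfl]
  rw [map_sum, map_sum]
  refine Finset.sum_congr rfl fun l _ => ?_
  rw [(haut (pt.1 * h⁻¹)).2.2, rho_mul haut]
  congr 3
  group

end WithAut

section WithAut2
include haut

lemma FY_zero (n : ℤ) (w : V) : F.Y 0 n w = 0 := by
  rw [map_zero]; rfl

lemma FY_zero' (a : V) (n : ℤ) : F.Y a n 0 = 0 := map_zero _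

lemma vacL_U (y : G × G → V) (n : ℤ)
    (hvl : ∀ (a : V) (n : ℤ), F.Y F.vac n a = if n = -1 then a else 0) :
    yU F ρ (vacU F) n y = if n = -1 then y else 0 := by
  have key : ∀ pt : G × G, yU F ρ (vacU F) n y pt = if n = -1 then y pt else 0 := by
    intro pt
    rw [yU_apply]
    rw [Finset.sum_eq_single pt.1]
    · have hv : vacU F (pt.1 * pt.1⁻¹, pt.1 * pt.2) = F.vac := by simp [vacU]
      rw [hv, hvl]
      have h2 : pt.1 * pt.1⁻¹ = 1 := by group
      rw [h2, rho_one haut]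
    · intro h _ hne
      have hcond : ¬ ((1 : G) = pt.1 * h⁻¹) := fun hc => hne (mul_inv_eq_one.mp hc.symm).symm
      have h0 : vacU F (pt.1 * h⁻¹, h * pt.2) = 0 := by simp [vacU, hcond]
      rw [h0, FY_zero haut]
    · intro hc; exact absurd (Finset.mem_univ pt.1) hc
  by_cases hn : n = -1
  · subst hn; funext pt; rw [key pt, if_pos rfl, if_pos rfl]
  · funext pt; rw [key pt, if_neg hn, if_neg hn]; rfl

lemma vacR_U (x : G × G → V) (n : ℤ) :
    yU F ρ x n (vacU F) = fun pt => F.Y (x pt) n F.vac := by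
  funext pt
  rw [yU_apply]
  rw [Finset.sum_eq_single (1 : G)]
  · have hv : vacU F ((1 : G), pt.2) = F.vac := by simp [vacU]
    rw [hv, (haut (pt.1 * 1⁻¹)).1]
    have harg : (pt.1 * 1⁻¹, 1 * pt.2) = pt := by simp
    rw [harg]
  · intro h _ hne
    have hcond : ¬ ((1 : G) = h) := fun hc => hne hc.symm
    have h0 : vacU F (h, pt.2) = 0 := by simp [vacU, hcond]
    rw [h0, map_zero, FY_zero' haut]
  · intro hc; exact absurd (Finset.mem_univ 1) hc

lemma tU_Y_U (x y : G × G → V) (n : ℤ)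
    (h6 : ∀ (a b : V) (n : ℤ), F.Y (F.T a) n b = F.T (F.Y a n b) - F.Y a n (F.T b)) :
    yU F ρ (tU F x) n y = tU F (yU F ρ x n y) - yU F ρ x n (tU F y) := by
  funext pt
  have hT : ∀ (g : G) (v : V), (ρ g) (F.T v) = F.T ((ρ g) v) := fun g v => (haut g).2.1 v
  have key : ∀ h : G, F.Y ((tU F x) (pt.1 * h⁻¹, h * pt.2)) n ((ρ (pt.1 * h⁻¹)) (y (h, pt.2)))
      = F.T (F.Y (x (pt.1 * h⁻¹, h * pt.2)) n ((ρ (pt.1 * h⁻¹)) (y (h, pt.2))))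
        - F.Y (x (pt.1 * h⁻¹, h * pt.2)) n ((ρ (pt.1 * h⁻¹)) ((tU F y) (h, pt.2))) := by
    intro h
    show F.Y (F.T (x (pt.1 * h⁻¹, h * pt.2))) n ((ρ (pt.1 * h⁻¹)) (y (h, pt.2))) = _
    rw [h6]
    congr 1
    rw [← hT]
    rfl
  simp only [Pi.sub_apply]
  rw [yU_apply, Finset.sum_congr rfl (fun h _ => key h), Finset.sum_sub_distrib]
  congr 1
  · show _ = (tU F) ((yU F ρ x n y)) pt
    show _ = F.T ((yU F ρ x n y) pt)
    rw [yU_apply, map_sum]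

lemma tU_Y_U' (x y : G × G → V) (n : ℤ)
    (h7 : ∀ (a b : V) (n : ℤ), F.Y (F.T a) n b = (-n : ℤ) • F.Y a (n - 1) b) :
    yU F ρ (tU F x) n y = (-n : ℤ) • yU F ρ x (n - 1) y := by
  funext pt
  have key : ∀ h : G, F.Y ((tU F x) (pt.1 * h⁻¹, h * pt.2)) n ((ρ (pt.1 * h⁻¹)) (y (h, pt.2)))
      = (-n : ℤ) • F.Y (x (pt.1 * h⁻¹, h * pt.2)) (n - 1) ((ρ (pt.1 * h⁻¹)) (y (h, pt.2))) := by
    intro h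
    show F.Y (F.T (x (pt.1 * h⁻¹, h * pt.2))) n ((ρ (pt.1 * h⁻¹)) (y (h, pt.2))) = _
    rw [h7]
  rw [yU_apply, Finset.sum_congr rfl (fun h _ => key h), ← Finset.smul_sum]
  rw [Pi.smul_apply, yU_apply]

lemma trunc_U (x y : G × G → V)
    (htr : ∀ a b : V, ∃ N : ℤ, ∀ n : ℤ, N ≤ n → F.Y a n b = 0) :
    ∃ N : ℤ, ∀ n : ℤ, N ≤ n → yU F ρ x n y = 0 := by
  choose Nf hNf using htr
  have hne : (Finset.univ : Finset ((G × G) × G)).Nonempty := ⟨((1,1),1), Finset.mem_univ _⟩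
  refine ⟨Finset.univ.sup' hne
    (fun w => Nf (x (w.1.1 * w.2⁻¹, w.2 * w.1.2)) ((ρ (w.1.1 * w.2⁻¹)) (y (w.2, w.1.2)))), ?_⟩
  intro n hn
  funext pt
  rw [yU_apply]
  refine Finset.sum_eq_zero fun h _ => ?_
  apply hNf
  exact le_trans (Finset.le_sup'
    (fun (w : (G × G) × G) => Nf (x (w.1.1 * w.2⁻¹, w.2 * w.1.2))
      ((ρ (w.1.1 * w.2⁻¹)) (y (w.2, w.1.2)))) (Finset.mem_univ (pt, h))) hn

end WithAut2

lemma FY_sum {ι : Type*} (s : Finset ι) (a : ι → V) (n : ℤ) (w : V) :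
    F.Y (∑ i ∈ s, a i) n w = ∑ i ∈ s, F.Y (a i) n w := by
  rw [map_sum, Finset.sum_apply, LinearMap.sum_apply]

section Comps
include haut

lemma prodZW_U_pt (x y z : G × G → V) (p q : ℤ) (pt : G × G) :
    (FUdef F ρ).prodZW x y z p q pt = ∑ h : G, ∑ l : G,
      F.prodZW (x (pt.1 * h⁻¹, h * pt.2)) ((ρ (pt.1 * h⁻¹)) (y (h * l⁻¹, l * pt.2)))
        ((ρ (pt.1 * l⁻¹)) (z (l, pt.2))) p q :=
  yU_yU haut x y z (-p-1) (-q-1) pt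

lemma compRHS_U_pt (x y z : G × G → V) (p q : ℤ) (pt : G × G) :
    (FUdef F ρ).compRHS x y z p q pt = ∑ h : G, ∑ l : G,
      F.compRHS (x (pt.1 * h⁻¹, h * pt.2)) ((ρ (pt.1 * h⁻¹)) (y (h * l⁻¹, l * pt.2)))
        ((ρ (pt.1 * l⁻¹)) (z (l, pt.2))) p q := by
  have step1 : (FUdef F ρ).compRHS x y z p q pt
      = negOnePow q • ∑ l : G, F.Y ((yU F ρ x (-p-1) y) (pt.1 * l⁻¹, l * pt.2)) (-q-1)
          ((ρ (pt.1 * l⁻¹)) (z (l, pt.2))) := rfl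
  have step2 : ∀ l : G, F.Y ((yU F ρ x (-p-1) y) (pt.1 * l⁻¹, l * pt.2)) (-q-1)
          ((ρ (pt.1 * l⁻¹)) (z (l, pt.2)))
      = ∑ h : G, F.Y (F.Y (x (pt.1 * h⁻¹, h * pt.2)) (-p-1)
          ((ρ (pt.1 * h⁻¹)) (y (h * l⁻¹, l * pt.2)))) (-q-1) ((ρ (pt.1 * l⁻¹)) (z (l, pt.2))) := by
    intro l
    rw [yU_apply, FY_sum]
    refine (Fintype.sum_equiv (Equiv.mulRight l⁻¹) _ _ fun h => ?_).symm
    show F.Y (F.Y (x (pt.1 * h⁻¹, h * pt.2)) (-p-1) ((ρ (pt.1 * h⁻¹)) (y (h * l⁻¹, l * pt.2))))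
        (-q-1) ((ρ (pt.1 * l⁻¹)) (z (l, pt.2)))
      = F.Y (F.Y (x ((pt.1 * l⁻¹, l * pt.2).1 * (h * l⁻¹)⁻¹, (h * l⁻¹) * (pt.1 * l⁻¹, l * pt.2).2))
          (-p-1) ((ρ ((pt.1 * l⁻¹, l * pt.2).1 * (h * l⁻¹)⁻¹)) (y (h * l⁻¹, (pt.1 * l⁻¹, l * pt.2).2))))
          (-q-1) ((ρ (pt.1 * l⁻¹)) (z (l, pt.2)))
    have e1 : (pt.1 * l⁻¹, l * pt.2).1 * (h * l⁻¹)⁻¹ = pt.1 * h⁻¹ := by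
      show pt.1 * l⁻¹ * (h * l⁻¹)⁻¹ = pt.1 * h⁻¹; group
    have e2 : (h * l⁻¹) * (pt.1 * l⁻¹, l * pt.2).2 = h * pt.2 := by
      show (h * l⁻¹) * (l * pt.2) = h * pt.2; group
    rw [e1, e2]
  rw [step1, Finset.sum_congr rfl (fun l _ => step2 l)]
  simp only [Finset.smul_sum]
  rw [Finset.sum_comm]
  rfl

end Comps

section CompLHS
include haut

lemma compLHS_U_pt (htr : ∀ a b : V, ∃ N : ℤ, ∀ n : ℤ, N ≤ n → F.Y a n b = 0)
    (x y z : G × G → V) (p q : ℤ) (pt : G × G) :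
    (FUdef F ρ).compLHS x y z p q pt = ∑ h : G, ∑ l : G,
      F.compLHS (x (pt.1 * h⁻¹, h * pt.2)) ((ρ (pt.1 * h⁻¹)) (y (h * l⁻¹, l * pt.2)))
        ((ρ (pt.1 * l⁻¹)) (z (l, pt.2))) p q := by
  obtain ⟨NU, hNU⟩ := trunc_U haut y z htr
  choose Nf hNf using htr
  have hne : (Finset.univ : Finset (G × G)).Nonempty := ⟨(1,1), Finset.mem_univ _⟩
  set Av : G → V := fun h => x (pt.1 * h⁻¹, h * pt.2) with hAv
  set Bv : G → G → V := fun h l => (ρ (pt.1 * h⁻¹)) (y (h * l⁻¹, l * pt.2)) with hBv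
  set Cv : G → V := fun l => (ρ (pt.1 * l⁻¹)) (z (l, pt.2)) with hCv
  set M : ℤ := max NU (Finset.univ.sup' hne (fun w : G × G => Nf (Bv w.1 w.2) (Cv w.2))) with hM
  set J : ℕ := (M + 1 + q).toNat with hJdef
  have hJge : ∀ j : ℕ, J ≤ j → M ≤ (j : ℤ) - 1 - q := by
    intro j hj
    have h1 := Int.self_le_toNat (M + 1 + q)
    have h2 : ((J : ℕ) : ℤ) ≤ (j : ℤ) := by exact_mod_cast hj
    rw [hJdef] at h2
    omega
  have hU : ∀ j : ℕ, J ≤ j →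
      ibinom (p + (j : ℤ)) j • yU F ρ x (-p - 1 - (j : ℤ)) (yU F ρ y ((j : ℤ) - 1 - q) z) = 0 := by
    intro j hj
    have h0 : yU F ρ y ((j : ℤ) - 1 - q) z = 0 :=
      hNU _ (le_trans (le_max_left _ _) (hJge j hj))
    rw [h0, map_zero, smul_zero]
  have h1 : (FUdef F ρ).compLHS x y z p q = negOnePow q • ∑ j ∈ Finset.range J,
      ibinom (p + (j : ℤ)) j • yU F ρ x (-p - 1 - (j : ℤ)) (yU F ρ y ((j : ℤ) - 1 - q) z) := by
    show negOnePow q • (∑ᶠ j : ℕ, _) = _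
    congr 1
    apply finsum_eq_finset_sum_of_support_subset
    intro j hjsupp
    by_contra hmem
    refine hjsupp (hU j ?_)
    by_contra hlt
    exact hmem (Finset.mem_coe.mpr (Finset.mem_range.mpr (lt_of_not_ge hlt)))
  have hVtr : ∀ (h l : G) (j : ℕ), J ≤ j →
      ibinom (p + (j : ℤ)) j • F.Y (Av h) (-p - 1 - (j : ℤ)) (F.Y (Bv h l) ((j : ℤ) - 1 - q) (Cv l)) = 0 := by
    intro h l j hj
    have h0' : F.Y (Bv h l) ((j : ℤ) - 1 - q) (Cv l) = 0 := by
      apply hNf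
      refine le_trans (le_trans ?_ (le_max_right NU _)) (hJge j hj)
      exact Finset.le_sup' (fun w : G × G => Nf (Bv w.1 w.2) (Cv w.2)) (Finset.mem_univ (h, l))
    rw [h0', map_zero, smul_zero]
  have h2 : ∀ h l : G, F.compLHS (Av h) (Bv h l) (Cv l) p q
      = negOnePow q • ∑ j ∈ Finset.range J,
          ibinom (p + (j : ℤ)) j • F.Y (Av h) (-p - 1 - (j : ℤ)) (F.Y (Bv h l) ((j : ℤ) - 1 - q) (Cv l)) := by
    intro h l
    show negOnePow q • (∑ᶠ j : ℕ, _) = _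
    congr 1
    apply finsum_eq_finset_sum_of_support_subset
    intro j hjsupp
    by_contra hmem
    refine hjsupp (hVtr h l j ?_)
    by_contra hlt
    exact hmem (Finset.mem_coe.mpr (Finset.mem_range.mpr (lt_of_not_ge hlt)))
  have expand : ∀ j : ℕ, (yU F ρ x (-p - 1 - (j : ℤ)) (yU F ρ y ((j : ℤ) - 1 - q) z)) pt
      = ∑ h : G, ∑ l : G, F.Y (Av h) (-p - 1 - (j : ℤ)) (F.Y (Bv h l) ((j : ℤ) - 1 - q) (Cv l)) :=
    fun j => yU_yU haut x y z _ _ pt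
  calc (FUdef F ρ).compLHS x y z p q pt
      = negOnePow q • ∑ j ∈ Finset.range J, ibinom (p + (j : ℤ)) j •
          ((yU F ρ x (-p - 1 - (j : ℤ)) (yU F ρ y ((j : ℤ) - 1 - q) z)) pt) := by
        rw [h1]
        simp only [Pi.smul_apply, Finset.sum_apply]
    _ = negOnePow q • ∑ j ∈ Finset.range J, ∑ h : G, ∑ l : G, ibinom (p + (j : ℤ)) j •
          F.Y (Av h) (-p - 1 - (j : ℤ)) (F.Y (Bv h l) ((j : ℤ) - 1 - q) (Cv l)) := by
        congr 1
        refine Finset.sum_congr rfl fun j _ => ?_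
        rw [expand j]
        simp only [Finset.smul_sum]
    _ = ∑ h : G, ∑ l : G, negOnePow q • ∑ j ∈ Finset.range J, ibinom (p + (j : ℤ)) j •
          F.Y (Av h) (-p - 1 - (j : ℤ)) (F.Y (Bv h l) ((j : ℤ) - 1 - q) (Cv l)) := by
        rw [show (∑ j ∈ Finset.range J, ∑ h : G, ∑ l : G, ibinom (p + (j : ℤ)) j •
            F.Y (Av h) (-p - 1 - (j : ℤ)) (F.Y (Bv h l) ((j : ℤ) - 1 - q) (Cv l)))
          = ∑ h : G, ∑ l : G, ∑ j ∈ Finset.range J, ibinom (p + (j : ℤ)) j •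
            F.Y (Av h) (-p - 1 - (j : ℤ)) (F.Y (Bv h l) ((j : ℤ) - 1 - q) (Cv l)) from
          by rw [Finset.sum_comm]; exact Finset.sum_congr rfl fun h _ => Finset.sum_comm]
        simp only [Finset.smul_sum]
    _ = ∑ h : G, ∑ l : G, F.compLHS (Av h) (Bv h l) (Cv l) p q := by
        exact Finset.sum_congr rfl fun h _ => Finset.sum_congr rfl fun l _ => (h2 h l).symm

end CompLHS

/-- auxiliary shifted fields for S-locality -/
def xpD (ρ' : G →* (V ≃ₗ[k] V)) (x : G × G → V) (gg : G × G) : G × G → V :=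
  fun β => if β.1 = gg.2 then (ρ' gg.1⁻¹) (x (gg.1, gg.2 * β.2)) else 0

def ypD (ρ' : G →* (V ≃ₗ[k] V)) (y : G × G → V) (gg : G × G) : G × G → V :=
  fun β => if β.1 = gg.1 then (ρ' gg.1) (y (gg.2, gg.2⁻¹ * β.2)) else 0

section Assoc
include haut

lemma prodWZ_U_pt (a b z : G × G → V) (p q : ℤ) (pt : G × G) :
    (FUdef F ρ).prodWZ a b z p q pt = ∑ h : G, ∑ l : G,
      F.Y (b (pt.1 * h⁻¹, h * pt.2)) (-q-1)
        (F.Y ((ρ (pt.1 * h⁻¹)) (a (h * l⁻¹, l * pt.2))) (-p-1) ((ρ (pt.1 * l⁻¹)) (z (l, pt.2)))) :=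
  yU_yU haut b a z (-q-1) (-p-1) pt

set_option maxHeartbeats 2000000 in
lemma assoc_U (htr : ∀ a b : V, ∃ N : ℤ, ∀ n : ℤ, N ≤ n → F.Y a n b = 0)
    (hassoc : F.IsAssocFA) : (FUdef F ρ).IsAssocFA := by
  intro x y z
  choose NA hNA using hassoc
  refine ⟨Finset.univ.sup (fun w : (G × G) × G × G =>
    NA (x (w.1.1 * w.2.1⁻¹, w.2.1 * w.1.2))
       ((ρ (w.1.1 * w.2.1⁻¹)) (y (w.2.1 * w.2.2⁻¹, w.2.2 * w.1.2)))
       ((ρ (w.1.1 * w.2.2⁻¹)) (z (w.2.2, w.1.2)))), ?_⟩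
  intro p q
  funext pt
  rw [zwMul_apply_pt, zwMul_apply_pt]
  rw [zwMul_congr (fun p q => compLHS_U_pt haut htr x y z p q pt)]
  rw [zwMul_congr (fun p q => compRHS_U_pt haut x y z p q pt)]
  rw [zwMul_sum, zwMul_sum]
  refine Finset.sum_congr rfl fun h _ => ?_
  rw [zwMul_sum, zwMul_sum]
  refine Finset.sum_congr rfl fun l _ => ?_
  exact zwMul_ge (fun p q => hNA _ _ _ p q)
    (Finset.le_sup (f := fun w : (G × G) × G × G =>
      NA (x (w.1.1 * w.2.1⁻¹, w.2.1 * w.1.2))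
         ((ρ (w.1.1 * w.2.1⁻¹)) (y (w.2.1 * w.2.2⁻¹, w.2.2 * w.1.2)))
         ((ρ (w.1.1 * w.2.2⁻¹)) (z (w.2.2, w.1.2)))) (Finset.mem_univ (pt, h, l))) p q

set_option maxHeartbeats 2000000 in
lemma sloc_U (htr : ∀ a b : V, ∃ N : ℤ, ∀ n : ℤ, N ≤ n → F.Y a n b = 0)
    (hloc : ∀ a b : V, F.IsLocalPair a b) (x y : G × G → V) :
    (FUdef F ρ).IsSLocalPair x y := by
  choose nl hnl using hloc
  set n0 : ℕ := Finset.univ.sup (fun w : (G × G) × G × G =>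
    nl (x (w.1.1 * w.2.1⁻¹, w.2.1 * w.1.2))
       ((ρ (w.1.1 * w.2.1⁻¹)) (y (w.2.1 * w.2.2⁻¹, w.2.2 * w.1.2)))) with hn0
  refine ⟨n0, Fintype.card (G × G),
    fun i => xpD ρ x ((Fintype.equivFin (G × G)).symm i),
    fun i => ypD ρ y ((Fintype.equivFin (G × G)).symm i), ?_⟩
  intro z p q
  funext pt
  have hL : zwMul n0 ((FUdef F ρ).prodZW x y z) p q pt
      = ∑ h : G, ∑ l : G, zwMul n0 (F.prodWZ (x (pt.1 * h⁻¹, h * pt.2))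
          ((ρ (pt.1 * h⁻¹)) (y (h * l⁻¹, l * pt.2))) ((ρ (pt.1 * l⁻¹)) (z (l, pt.2)))) p q := by
    rw [zwMul_apply_pt, zwMul_congr (fun p q => prodZW_U_pt haut x y z p q pt), zwMul_sum]
    refine Finset.sum_congr rfl fun h _ => ?_
    rw [zwMul_sum]
    refine Finset.sum_congr rfl fun l _ => ?_
    exact zwMul_ge (fun p q => hnl _ _ _ p q)
      (Finset.le_sup (f := fun w : (G × G) × G × G =>
        nl (x (w.1.1 * w.2.1⁻¹, w.2.1 * w.1.2))
           ((ρ (w.1.1 * w.2.1⁻¹)) (y (w.2.1 * w.2.2⁻¹, w.2.2 * w.1.2)))) (Finset.mem_univ (pt, h, l))) p q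
  have per_i : ∀ gg : G × G, (zwMul n0 ((FUdef F ρ).prodWZ (xpD ρ x gg) (ypD ρ y gg) z) p q) pt
      = ∑ h : G, ∑ l : G, zwMul n0 (fun p q => F.Y (ypD ρ y gg (pt.1 * h⁻¹, h * pt.2)) (-q-1)
          (F.Y ((ρ (pt.1 * h⁻¹)) (xpD ρ x gg (h * l⁻¹, l * pt.2))) (-p-1)
            ((ρ (pt.1 * l⁻¹)) (z (l, pt.2))))) p q := by
    intro gg
    rw [zwMul_apply_pt,
      zwMul_congr (fun p q => prodWZ_U_pt haut (xpD ρ x gg) (ypD ρ y gg) z p q pt), zwMul_sum]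
    exact Finset.sum_congr rfl fun h _ => zwMul_sum _ _ _ _ _
  have key : ∀ h l : G, (∑ gg : G × G, zwMul n0 (fun p q =>
        F.Y (ypD ρ y gg (pt.1 * h⁻¹, h * pt.2)) (-q-1)
          (F.Y ((ρ (pt.1 * h⁻¹)) (xpD ρ x gg (h * l⁻¹, l * pt.2))) (-p-1)
            ((ρ (pt.1 * l⁻¹)) (z (l, pt.2))))) p q)
      = zwMul n0 (F.prodWZ (x (pt.1 * h⁻¹, h * pt.2))
          ((ρ (pt.1 * h⁻¹)) (y (h * l⁻¹, l * pt.2))) ((ρ (pt.1 * l⁻¹)) (z (l, pt.2)))) p q := by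
    intro h l
    rw [Finset.sum_eq_single (pt.1 * h⁻¹, h * l⁻¹)]
    · refine zwMul_congr (fun p q => ?_) p q
      have hy : ypD ρ y (pt.1 * h⁻¹, h * l⁻¹) (pt.1 * h⁻¹, h * pt.2)
          = (ρ (pt.1 * h⁻¹)) (y (h * l⁻¹, l * pt.2)) := by
        show (if pt.1 * h⁻¹ = pt.1 * h⁻¹ then _ else 0) = _
        rw [if_pos rfl]
        have e1 : (h * l⁻¹)⁻¹ * (h * pt.2) = l * pt.2 := by group
        rw [e1]
      have hx : (ρ (pt.1 * h⁻¹)) (xpD ρ x (pt.1 * h⁻¹, h * l⁻¹) (h * l⁻¹, l * pt.2))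
          = x (pt.1 * h⁻¹, h * pt.2) := by
        show (ρ (pt.1 * h⁻¹)) (if h * l⁻¹ = h * l⁻¹ then _ else 0) = _
        rw [if_pos rfl]
        have e2 : (h * l⁻¹) * (l * pt.2) = h * pt.2 := by group
        rw [e2, rho_mul haut, mul_inv_cancel, rho_one haut]
      rw [hy, hx]
      rfl
    · intro gg _ hgg
      refine (zwMul_congr (fun p q => ?_) p q).trans (zwMul_zero_fn n0 p q)
      by_cases h1 : pt.1 * h⁻¹ = gg.1
      · have h2 : ¬ (h * l⁻¹ = gg.2) := by
          intro h2
          apply hgg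
          have : gg = (gg.1, gg.2) := rfl
          rw [this, ← h1, ← h2]
        have hx0 : xpD ρ x gg (h * l⁻¹, l * pt.2) = 0 := if_neg h2
        rw [hx0, map_zero, FY_zero haut, map_zero]
      · have hy0 : ypD ρ y gg (pt.1 * h⁻¹, h * pt.2) = 0 := if_neg h1
        rw [hy0, FY_zero haut]
    · intro hnotmem
      exact absurd (Finset.mem_univ _) hnotmem
  rw [hL, Finset.sum_apply]
  have reindex : (∑ i : Fin (Fintype.card (G × G)), (zwMul n0 ((FUdef F ρ).prodWZ
        (xpD ρ x ((Fintype.equivFin (G × G)).symm i)) (ypD ρ y ((Fintype.equivFin (G × G)).symm i)) z) p q) pt)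
      = ∑ gg : G × G, (zwMul n0 ((FUdef F ρ).prodWZ (xpD ρ x gg) (ypD ρ y gg) z) p q) pt :=
    Fintype.sum_equiv (Fintype.equivFin (G × G)).symm _ _ (fun i => rfl)
  rw [reindex, Finset.sum_congr rfl (fun gg _ => per_i gg)]
  rw [show (∑ gg : G × G, ∑ h : G, ∑ l : G, zwMul n0 (fun p q =>
        F.Y (ypD ρ y gg (pt.1 * h⁻¹, h * pt.2)) (-q-1)
          (F.Y ((ρ (pt.1 * h⁻¹)) (xpD ρ x gg (h * l⁻¹, l * pt.2))) (-p-1)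
            ((ρ (pt.1 * l⁻¹)) (z (l, pt.2))))) p q)
      = ∑ h : G, ∑ l : G, ∑ gg : G × G, zwMul n0 (fun p q =>
        F.Y (ypD ρ y gg (pt.1 * h⁻¹, h * pt.2)) (-q-1)
          (F.Y ((ρ (pt.1 * h⁻¹)) (xpD ρ x gg (h * l⁻¹, l * pt.2))) (-p-1)
            ((ρ (pt.1 * l⁻¹)) (z (l, pt.2))))) p q from
    by rw [Finset.sum_comm]; exact Finset.sum_congr rfl fun h _ => Finset.sum_comm]
  exact (Finset.sum_congr rfl fun h _ => Finset.sum_congr rfl fun l _ => (key h l)).symm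

end Assoc

section Tensor

variable (k G) in
/-- trilinear evaluation map -/
def triW : V →ₗ[k] MonoidAlgebra k G →ₗ[k] (G → k) →ₗ[k] (G × G → V) where
  toFun u :=
    { toFun := fun s =>
        { toFun := fun f => fun p => (s.coeff p.1 * f p.2) • u
          map_add' := fun f g => by
            funext p
            simp only [Pi.add_apply, mul_add, add_smul]
          map_smul' := fun c f => by
            funext p
            simp only [Pi.smul_apply, smul_eq_mul, RingHom.id_apply, Pi.smul_apply, smul_smul]
            congr 1
            ring }
      map_add' := fun s t => by
        apply LinearMap.ext; intro f
        funext p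
        simp only [LinearMap.coe_mk, AddHom.coe_mk, LinearMap.add_apply, Pi.add_apply]
        rw [show (s + t).coeff p.1 = s.coeff p.1 + t.coeff p.1 from rfl, add_mul, add_smul]
      map_smul' := fun c s => by
        apply LinearMap.ext; intro f
        funext p
        simp only [LinearMap.coe_mk, AddHom.coe_mk, RingHom.id_apply, LinearMap.smul_apply,
          Pi.smul_apply, smul_smul]
        rw [show (c • s).coeff p.1 = c * s.coeff p.1 from rfl]
        congr 1
        ring }
  map_add' u v := by
    apply LinearMap.ext; intro s
    apply LinearMap.ext; intro f
    funext p
    simp only [LinearMap.coe_mk, AddHom.coe_mk, LinearMap.add_apply, Pi.add_apply, smul_add]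
  map_smul' c u := by
    apply LinearMap.ext; intro s
    apply LinearMap.ext; intro f
    funext p
    simp only [LinearMap.coe_mk, AddHom.coe_mk, RingHom.id_apply, LinearMap.smul_apply,
      Pi.smul_apply]
    rw [smul_comm]

variable (k V G) in
/-- from the smash product to the function space -/
noncomputable def phiW : ((V ⊗[k] MonoidAlgebra k G) ⊗[k] (G → k)) →ₗ[k] (G × G → V) :=
  TensorProduct.lift (TensorProduct.lift (triW k G))

lemma phiW_tmul (u : V) (s : MonoidAlgebra k G) (f : G → k) :
    phiW k V G ((u ⊗ₜ[k] s) ⊗ₜ[k] f) = fun p => (s.coeff p.1 * f p.2) • u := rfl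

variable (k V G) in
/-- single inclusion -/
noncomputable def incW (g a : G) : V →ₗ[k] ((V ⊗[k] MonoidAlgebra k G) ⊗[k] (G → k)) where
  toFun u := (u ⊗ₜ[k] MonoidAlgebra.single g (1 : k)) ⊗ₜ[k] Pi.single a (1 : k)
  map_add' u v := by simp [TensorProduct.add_tmul]
  map_smul' c u := by simp [TensorProduct.smul_tmul']

variable (k V G) in
/-- from the function space to the smash product -/
noncomputable def psiW : (G × G → V) →ₗ[k] ((V ⊗[k] MonoidAlgebra k G) ⊗[k] (G → k)) :=
  ∑ p : G × G, (incW k V G p.1 p.2).comp (LinearMap.proj p)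

lemma psiW_apply (x : G × G → V) :
    psiW k V G x = ∑ p : G × G, (x p ⊗ₜ[k] MonoidAlgebra.single p.1 (1 : k)) ⊗ₜ[k]
      Pi.single p.2 (1 : k) := by
  simp [psiW, incW, LinearMap.sum_apply, LinearMap.coe_mk, AddHom.coe_mk]
  exact Finset.sum_congr rfl fun _ _ => rfl

/-- point mass -/
def pmW (g a : G) (u : V) : G × G → V := fun p => if p = (g, a) then u else 0

lemma phiW_single (u : V) (g a : G) :
    phiW k V G ((u ⊗ₜ[k] MonoidAlgebra.single g (1 : k)) ⊗ₜ[k] Pi.single a (1 : k))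
      = pmW g a u := by
  rw [phiW_tmul]
  funext p
  show ((MonoidAlgebra.single g (1:k)).coeff p.1 * (Pi.single a (1:k) : G → k) p.2) • u
      = if p = (g, a) then u else 0
  rw [show (MonoidAlgebra.single g (1:k)).coeff p.1 = if g = p.1 then (1:k) else 0 from
      MonoidAlgebra.single_apply,
    show (Pi.single a (1:k) : G → k) p.2 = if p.2 = a then (1:k) else 0 from
      Pi.single_apply a (1:k) p.2]
  by_cases h1 : g = p.1
  · by_cases h2 : p.2 = a
    · rw [if_pos h1, if_pos h2,
        if_pos (show p = (g,a) from by rw [Prod.ext_iff]; exact ⟨h1.symm, h2⟩),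
        one_mul, one_smul]
    · rw [if_neg h2, mul_zero, zero_smul, if_neg (fun hc => h2 (by rw [hc]))]
  · rw [if_neg h1, zero_mul, zero_smul, if_neg (fun hc => h1 (by rw [hc]))]

lemma psiW_pm (g a : G) (u : V) :
    psiW k V G (pmW g a u)
      = (u ⊗ₜ[k] MonoidAlgebra.single g (1 : k)) ⊗ₜ[k] Pi.single a (1 : k) := by
  rw [psiW_apply, Finset.sum_eq_single (g, a)]
  · simp [pmW]
  · intro q _ hq
    have : pmW g a u q = 0 := if_neg hq
    rw [this]
    simp [TensorProduct.zero_tmul]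
  · intro h; exact absurd (Finset.mem_univ _) h

lemma phiW_comp_psiW : (phiW k V G).comp (psiW k V G) = LinearMap.id := by
  apply LinearMap.ext; intro x
  funext pt
  rw [LinearMap.comp_apply, psiW_apply, map_sum, LinearMap.id_apply]
  have : ∀ q : G × G, phiW k V G ((x q ⊗ₜ[k] MonoidAlgebra.single q.1 (1:k)) ⊗ₜ[k]
      Pi.single q.2 (1:k)) = pmW q.1 q.2 (x q) := fun q => phiW_single (x q) q.1 q.2
  rw [Finset.sum_congr rfl fun q _ => this q]
  rw [Finset.sum_apply]
  rw [Finset.sum_eq_single pt]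
  · simp [pmW]
  · intro q _ hq
    have hne : ¬ (pt = (q.1, q.2)) := fun hc => hq (by rw [hc])
    simp [pmW, hne]
  · intro h; exact absurd (Finset.mem_univ _) h

lemma psiW_comp_phiW : (psiW k V G).comp (phiW k V G) = LinearMap.id := by
  apply TensorProduct.ext'
  intro t f
  induction t using TensorProduct.induction_on with
  | zero => simp [TensorProduct.zero_tmul]
  | add a b ha hb => rw [TensorProduct.add_tmul, map_add, map_add, ha, hb]
  | tmul u s =>
    rw [LinearMap.comp_apply, LinearMap.id_apply]
    have hs : s = ∑ g : G, s.coeff g • MonoidAlgebra.single g (1 : k) := by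
      ext g'
      rw [MonoidAlgebra.coeff_sum, Finset.sum_apply']
      simp [MonoidAlgebra.single_apply, Finsupp.single_apply, Finset.sum_ite_eq, smul_eq_mul]
    have hf : f = ∑ a : G, f a • (Pi.single a (1 : k) : G → k) := by
      funext b
      rw [Finset.sum_apply]
      simp [Pi.single_apply, Finset.sum_ite_eq, smul_eq_mul]
    have decomp : (u ⊗ₜ[k] s) ⊗ₜ[k] f = ∑ g : G, ∑ a : G, (s.coeff g * f a) •
        ((u ⊗ₜ[k] MonoidAlgebra.single g (1:k)) ⊗ₜ[k] Pi.single a (1:k)) := by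
      conv_lhs => rw [hs, hf]
      rw [TensorProduct.tmul_sum u, TensorProduct.sum_tmul]
      refine Finset.sum_congr rfl fun g _ => ?_
      rw [TensorProduct.tmul_sum]
      refine Finset.sum_congr rfl fun a _ => ?_
      simp only [TensorProduct.tmul_smul, TensorProduct.smul_tmul', smul_smul]
      rw [mul_comm (f a) (s.coeff g)]
    rw [decomp, map_sum, map_sum]
    refine Finset.sum_congr rfl fun g _ => ?_
    rw [map_sum, map_sum]
    refine Finset.sum_congr rfl fun a _ => ?_
    rw [map_smul, map_smul, phiW_single, psiW_pm]

lemma phiW_psiW_apply (x : G × G → V) : phiW k V G (psiW k V G x) = x :=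
  LinearMap.congr_fun phiW_comp_psiW x

lemma psiW_phiW_apply (w : (V ⊗[k] MonoidAlgebra k G) ⊗[k] (G → k)) :
    psiW k V G (phiW k V G w) = w :=
  LinearMap.congr_fun psiW_comp_phiW w

end Tensor

section FW

lemma support_trunc {W' : Type*} [AddCommGroup W'] (g : ℕ → W') (N q : ℤ)
    (h0 : ∀ j : ℕ, N ≤ (j : ℤ) - 1 - q → g j = 0) :
    (Function.support g).Finite := by
  apply Set.Finite.subset (Finset.range (N + 1 + q).toNat).finite_toSet
  intro j hj
  by_contra hmem
  apply hj
  apply h0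
  have h1 : (N + 1 + q).toNat ≤ j := by
    by_contra hlt
    exact hmem (Finset.mem_coe.mpr (Finset.mem_range.mpr (lt_of_not_ge hlt)))
  have h2 := Int.self_le_toNat (N + 1 + q)
  have h3 : ((N + 1 + q).toNat : ℤ) ≤ (j : ℤ) := by exact_mod_cast h1
  omega

variable (F ρ) in
/-- the `Y` map of the smash product -/
noncomputable def yW : ((V ⊗[k] MonoidAlgebra k G) ⊗[k] (G → k)) →ₗ[k]
    ℤ → Module.End k ((V ⊗[k] MonoidAlgebra k G) ⊗[k] (G → k)) where
  toFun x := fun n => (psiW k V G).comp ((yU F ρ (phiW k V G x) n).comp (phiW k V G))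
  map_add' x x' := by
    funext n
    apply LinearMap.ext; intro w
    simp only [LinearMap.comp_apply, map_add, Pi.add_apply, LinearMap.add_apply]
  map_smul' c x := by
    funext n
    apply LinearMap.ext; intro w
    simp only [LinearMap.comp_apply, map_smul, Pi.smul_apply, LinearMap.smul_apply,
      RingHom.id_apply]

variable (F ρ) in
/-- the smash product `VAData` -/
noncomputable def FWdef : VAData k ((V ⊗[k] MonoidAlgebra k G) ⊗[k] (G → k)) :=
  ⟨yW F ρ, psiW k V G (vacU F), (psiW k V G).comp ((tU F).comp (phiW k V G))⟩

lemma yW_eq (x y : (V ⊗[k] MonoidAlgebra k G) ⊗[k] (G → k)) (n : ℤ) :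
    (FWdef F ρ).Y x n y = psiW k V G (yU F ρ (phiW k V G x) n (phiW k V G y)) := rfl

lemma tW_eq (w : (V ⊗[k] MonoidAlgebra k G) ⊗[k] (G → k)) :
    (FWdef F ρ).T w = psiW k V G (tU F (phiW k V G w)) := rfl

lemma vacW_eq : (FWdef F ρ).vac = psiW k V G (vacU F) := rfl

section YUPM
include haut

lemma yU_pm (u v : V) (g h a b : G) (n : ℤ) :
    yU F ρ (pmW g a u) n (pmW h b v)
      = if a = h * b then pmW (g * h) b (F.Y u n ((ρ g) v)) else 0 := by
  funext pt
  have hRHS : ((if a = h * b then pmW (g * h) b (F.Y u n ((ρ g) v)) else 0) : G × G → V) pt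
      = if a = h * b then pmW (g * h) b (F.Y u n ((ρ g) v)) pt else 0 := by
    split_ifs <;> rfl
  rw [hRHS, yU_apply, Finset.sum_eq_single h]
  · by_cases hb2 : pt.2 = b
    · have hv : pmW h b v (h, pt.2) = v := by
        show (if ((h : G), pt.2) = (h, b) then v else 0) = v
        refine if_pos ?_
        rw [hb2]
      rw [hv]
      by_cases h1 : pt.1 = g * h
      · have hg : pt.1 * h⁻¹ = g := by rw [h1]; group
        by_cases hab : a = h * b
        · have hxu : pmW g a u (pt.1 * h⁻¹, h * pt.2) = u := by
            show (if (pt.1 * h⁻¹, h * pt.2) = (g, a) then u else 0) = u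
            refine if_pos ?_
            rw [h1, hb2, hab]
            congr 1
            group
          have hpm : pmW (g * h) b (F.Y u n ((ρ g) v)) pt = F.Y u n ((ρ g) v) := by
            show (if pt = (g * h, b) then F.Y u n ((ρ g) v) else 0) = F.Y u n ((ρ g) v)
            refine if_pos ?_
            rw [← h1, ← hb2]
          rw [hxu, hg, if_pos hab, hpm]
        · have hxu : pmW g a u (pt.1 * h⁻¹, h * pt.2) = 0 := by
            show (if (pt.1 * h⁻¹, h * pt.2) = (g, a) then u else 0) = 0
            refine if_neg fun hc => hab ?_
            have h2 : h * pt.2 = a := (Prod.ext_iff.mp hc).2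
            rw [hb2] at h2
            exact h2.symm
          rw [hxu, FY_zero haut, if_neg hab]
      · have hxu : pmW g a u (pt.1 * h⁻¹, h * pt.2) = 0 := by
          show (if (pt.1 * h⁻¹, h * pt.2) = (g, a) then u else 0) = 0
          refine if_neg fun hc => h1 ?_
          have h2 : pt.1 * h⁻¹ = g := (Prod.ext_iff.mp hc).1
          rw [← h2]
          group
        have hpm0 : pmW (g * h) b (F.Y u n ((ρ g) v)) pt = 0 := by
          show (if pt = (g * h, b) then F.Y u n ((ρ g) v) else 0) = 0
          refine if_neg fun hc => h1 ?_
          exact (Prod.ext_iff.mp hc).1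
        rw [hxu, FY_zero haut, hpm0, ite_self]
    · have hv0 : pmW h b v (h, pt.2) = 0 := by
        show (if ((h : G), pt.2) = (h, b) then v else 0) = 0
        refine if_neg fun hc => hb2 ?_
        exact (Prod.ext_iff.mp hc).2
      have hpm0 : pmW (g * h) b (F.Y u n ((ρ g) v)) pt = 0 := by
        show (if pt = (g * h, b) then F.Y u n ((ρ g) v) else 0) = 0
        refine if_neg fun hc => hb2 ?_
        exact (Prod.ext_iff.mp hc).2
      rw [hv0, map_zero, map_zero, hpm0, ite_self]
  · intro h' _ hne
    have hv0 : pmW h b v (h', pt.2) = 0 := by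
      show (if ((h' : G), pt.2) = (h, b) then v else 0) = 0
      refine if_neg fun hc => hne ?_
      exact (Prod.ext_iff.mp hc).1
    rw [hv0, map_zero, map_zero]
  · intro hc; exact absurd (Finset.mem_univ _) hc

end YUPM

end FW

lemma zwMul_psiW (n : ℕ) (f : ℤ → ℤ → (G × G → V)) (p q : ℤ) :
    zwMul n (fun p q => psiW k V G (f p q)) p q = psiW k V G (zwMul n f p q) := by
  simp [zwMul, map_sum, map_zsmul]

section Transport
include haut

lemma compLHS_W (htr : ∀ a b : V, ∃ N : ℤ, ∀ n : ℤ, N ≤ n → F.Y a n b = 0)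
    (x y z : (V ⊗[k] MonoidAlgebra k G) ⊗[k] (G → k)) (p q : ℤ) :
    (FWdef F ρ).compLHS x y z p q
      = psiW k V G ((FUdef F ρ).compLHS (phiW k V G x) (phiW k V G y) (phiW k V G z) p q) := by
  obtain ⟨N, hN⟩ := trunc_U haut (phiW k V G y) (phiW k V G z) htr
  have hfin : (Function.support (fun j : ℕ => ibinom (p + (j:ℤ)) j •
      yU F ρ (phiW k V G x) (-p - 1 - (j:ℤ))
        (yU F ρ (phiW k V G y) ((j:ℤ) - 1 - q) (phiW k V G z)))).Finite := by
    apply support_trunc _ N q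
    intro j hj
    rw [hN _ hj, map_zero, smul_zero]
  have hterm : ∀ j : ℕ, ibinom (p + (j:ℤ)) j •
        (FWdef F ρ).Y x (-p - 1 - (j:ℤ)) ((FWdef F ρ).Y y ((j:ℤ) - 1 - q) z)
      = psiW k V G (ibinom (p + (j:ℤ)) j • yU F ρ (phiW k V G x) (-p - 1 - (j:ℤ))
          (yU F ρ (phiW k V G y) ((j:ℤ) - 1 - q) (phiW k V G z))) := by
    intro j
    rw [map_zsmul]
    congr 1
    rw [yW_eq, yW_eq, phiW_psiW_apply]
  show negOnePow q • (∑ᶠ j : ℕ, ibinom (p + (j:ℤ)) j •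
      (FWdef F ρ).Y x (-p - 1 - (j:ℤ)) ((FWdef F ρ).Y y ((j:ℤ) - 1 - q) z)) = _
  rw [finsum_congr hterm]
  have hmap := AddMonoidHom.map_finsum (psiW k V G).toAddMonoidHom hfin
  rw [LinearMap.toAddMonoidHom_coe] at hmap
  rw [← hmap]
  rw [show (FUdef F ρ).compLHS (phiW k V G x) (phiW k V G y) (phiW k V G z) p q
      = negOnePow q • (∑ᶠ j : ℕ, ibinom (p + (j:ℤ)) j • yU F ρ (phiW k V G x) (-p - 1 - (j:ℤ))
          (yU F ρ (phiW k V G y) ((j:ℤ) - 1 - q) (phiW k V G z))) from rfl]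
  rw [map_zsmul]

lemma compRHS_W (x y z : (V ⊗[k] MonoidAlgebra k G) ⊗[k] (G → k)) (p q : ℤ) :
    (FWdef F ρ).compRHS x y z p q
      = psiW k V G ((FUdef F ρ).compRHS (phiW k V G x) (phiW k V G y) (phiW k V G z) p q) := by
  show negOnePow q • (FWdef F ρ).Y ((FWdef F ρ).Y x (-p - 1) y) (-q - 1) z = _
  rw [yW_eq, yW_eq, phiW_psiW_apply]
  rw [show (FUdef F ρ).compRHS (phiW k V G x) (phiW k V G y) (phiW k V G z) p q
      = negOnePow q • yU F ρ (yU F ρ (phiW k V G x) (-p - 1) (phiW k V G y)) (-q - 1)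
          (phiW k V G z) from rfl]
  rw [map_zsmul]

lemma prodZW_W (x y z : (V ⊗[k] MonoidAlgebra k G) ⊗[k] (G → k)) (p q : ℤ) :
    (FWdef F ρ).prodZW x y z p q
      = psiW k V G ((FUdef F ρ).prodZW (phiW k V G x) (phiW k V G y) (phiW k V G z) p q) := by
  show (FWdef F ρ).Y x (-p - 1) ((FWdef F ρ).Y y (-q - 1) z) = _
  rw [yW_eq, yW_eq, phiW_psiW_apply]
  rfl

lemma prodWZ_W (x y z : (V ⊗[k] MonoidAlgebra k G) ⊗[k] (G → k)) (p q : ℤ) :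
    (FWdef F ρ).prodWZ x y z p q
      = psiW k V G ((FUdef F ρ).prodWZ (phiW k V G x) (phiW k V G y) (phiW k V G z) p q) := by
  show (FWdef F ρ).Y y (-q - 1) ((FWdef F ρ).Y x (-p - 1) z) = _
  rw [yW_eq, yW_eq, phiW_psiW_apply]
  rfl

end Transport

end S12aux

/-- Let `V` be an `H`-module vertex algebra with `H = kG` the group
algebra of a finite subgroup `G` of `Aut(V)` (given by a faithful action `ρ` by vertex
algebra automorphisms), and `H* = (G → k)` the dual Hopf algebra with basis
`ρ_a = Pi.single a 1` and identity `E = 1`.  Then `V#H#H*` with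
`Y^{V#H#H*}(u#g#ρ_a,z)(v#h#ρ_b) = δ_{a,hb}·Y(u,z)(gv)#gh#ρ_b`, vacuum `1#1#E` and
translation `s#1#E`, is an `S`-local vertex algebra. -/
theorem statement12 {k : Type*} [Field k] [CharZero k]
    {V : Type*} [AddCommGroup V] [Module k V]
    {G : Type*} [Group G] [Fintype G] [DecidableEq G]
    (F : VAData k V) (hF : F.IsVertexAlgebra)
    (ρ : G →* (V ≃ₗ[k] V)) (hinj : Function.Injective ρ)
    (haut : ∀ g : G, IsVAAut F (ρ g)) :
    ∃ FW : VAData k ((V ⊗[k] MonoidAlgebra k G) ⊗[k] (G → k)),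
      (∀ (u v : V) (g h a b : G) (n : ℤ),
        FW.Y ((u ⊗ₜ[k] MonoidAlgebra.single g (1 : k)) ⊗ₜ[k] Pi.single a (1 : k)) n
             ((v ⊗ₜ[k] MonoidAlgebra.single h (1 : k)) ⊗ₜ[k] Pi.single b (1 : k))
          = if a = h * b then
              ((F.Y u n (ρ g v) : V) ⊗ₜ[k] MonoidAlgebra.single (g * h) (1 : k))
                ⊗ₜ[k] Pi.single b (1 : k)
            else 0) ∧
      FW.vac = (F.vac ⊗ₜ[k] (1 : MonoidAlgebra k G)) ⊗ₜ[k] (1 : G → k) ∧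
      (∀ (u : V) (x : MonoidAlgebra k G) (f : G → k),
        FW.T ((u ⊗ₜ[k] x) ⊗ₜ[k] f) = ((F.T u : V) ⊗ₜ[k] x) ⊗ₜ[k] f) ∧
      FW.IsSLocalVA := by
  obtain ⟨⟨⟨htr, hvl, hvr0, hvrm1, hvrm2, hT6, hT7⟩, hassoc⟩, hloc⟩ := hF
  refine ⟨FWdef F ρ, ?_, ?_, ?_, ?_⟩
  · -- the multiplication formula
    intro u v g h a b n
    rw [yW_eq, phiW_single, phiW_single, yU_pm haut]
    by_cases hab : a = h * b
    · rw [if_pos hab, if_pos hab, psiW_pm]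
    · rw [if_neg hab, if_neg hab, map_zero]
  · -- the vacuum
    have hvac : phiW k V G ((F.vac ⊗ₜ[k] (1 : MonoidAlgebra k G)) ⊗ₜ[k] (1 : G → k))
        = vacU F := by
      rw [MonoidAlgebra.one_def, phiW_tmul]
      funext p
      show ((MonoidAlgebra.single (1 : G) (1 : k)).coeff p.1 * (1 : G → k) p.2) • F.vac
          = vacU F p
      rw [MonoidAlgebra.single_apply, Pi.one_apply, mul_one]
      show _ = if (1 : G) = p.1 then F.vac else 0
      split_ifs with hh
      · rw [one_smul]
      · rw [zero_smul]
    rw [vacW_eq, ← hvac, psiW_phiW_apply]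
  · -- the translation operator
    intro u x f
    rw [tW_eq]
    have hT : tU F (phiW k V G ((u ⊗ₜ[k] x) ⊗ₜ[k] f))
        = phiW k V G (((F.T u : V) ⊗ₜ[k] x) ⊗ₜ[k] f) := by
      rw [phiW_tmul, phiW_tmul]
      funext p
      show F.T ((x.coeff p.1 * f p.2) • u) = (x.coeff p.1 * f p.2) • (F.T u : V)
      rw [map_smul]
    rw [hT, psiW_phiW_apply]
  · -- S-local vertex algebra
    refine ⟨⟨⟨?_, ?_, ?_, ?_, ?_, ?_, ?_⟩, ?_⟩, ?_⟩
    · -- truncation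
      intro x y
      obtain ⟨N, hN⟩ := trunc_U haut (phiW k V G x) (phiW k V G y) htr
      exact ⟨N, fun n hn => by rw [yW_eq, hN n hn, map_zero]⟩
    · -- left vacuum
      intro a n
      rw [vacW_eq, yW_eq, phiW_psiW_apply, vacL_U haut (phiW k V G a) n hvl]
      by_cases hn : n = -1
      · rw [if_pos hn, if_pos hn, psiW_phiW_apply]
      · rw [if_neg hn, if_neg hn, map_zero]
    · -- right vacuum, n nonneg
      intro a n hn
      rw [vacW_eq, yW_eq, phiW_psiW_apply, vacR_U haut (phiW k V G a) n]
      have h0 : (fun pt => F.Y ((phiW k V G a) pt) n F.vac) = (0 : G × G → V) := by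
        funext pt
        rw [hvr0 _ n hn]
        rfl
      rw [h0, map_zero]
    · -- creation, -1
      intro a
      rw [vacW_eq, yW_eq, phiW_psiW_apply, vacR_U haut (phiW k V G a) (-1)]
      have h0 : (fun pt => F.Y ((phiW k V G a) pt) (-1) F.vac) = phiW k V G a := by
        funext pt
        rw [hvrm1]
      rw [h0, psiW_phiW_apply]
    · -- creation, -2
      intro a
      rw [vacW_eq, yW_eq, phiW_psiW_apply, vacR_U haut (phiW k V G a) (-2), tW_eq]
      congr 1
      funext pt
      show F.Y ((phiW k V G a) pt) (-2) F.vac = F.T ((phiW k V G a) pt)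
      rw [hvrm2]
    · -- translation axiom 1
      intro a b n
      rw [tW_eq, yW_eq, phiW_psiW_apply,
        tU_Y_U haut (phiW k V G a) (phiW k V G b) n hT6, map_sub]
      congr 1
      · rw [tW_eq, yW_eq, phiW_psiW_apply]
      · rw [yW_eq, tW_eq, phiW_psiW_apply]
    · -- translation axiom 2
      intro a b n
      rw [tW_eq, yW_eq, phiW_psiW_apply,
        tU_Y_U' haut (phiW k V G a) (phiW k V G b) n hT7, map_zsmul, yW_eq]
    · -- associativity
      intro x y z
      obtain ⟨N, hN⟩ := assoc_U haut htr hassoc (phiW k V G x) (phiW k V G y) (phiW k V G z)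
      refine ⟨N, fun p q => ?_⟩
      rw [zwMul_congr (fun p q => compLHS_W haut htr x y z p q),
        zwMul_congr (fun p q => compRHS_W haut x y z p q),
        zwMul_psiW, zwMul_psiW, hN p q]
    · -- S-locality
      intro x y
      obtain ⟨n0, m, A, B, hAB⟩ := sloc_U haut htr hloc (phiW k V G x) (phiW k V G y)
      refine ⟨n0, m, fun i => psiW k V G (A i), fun i => psiW k V G (B i), ?_⟩
      intro z p q
      rw [zwMul_congr (fun p q => prodZW_W haut x y z p q), zwMul_psiW,
        hAB (phiW k V G z) p q, map_sum]
      refine Finset.sum_congr rfl fun i _ => ?_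
      rw [zwMul_congr (fun p q =>
          prodWZ_W haut (psiW k V G (A i)) (psiW k V G (B i)) z p q),
        zwMul_psiW, phiW_psiW_apply, phiW_psiW_apply]

end HopfVA
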